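/- arXiv:1711.00433 — 4 statements merged into one kernel-verified Lean document; each statement's English description precedes it below -/
import Mathlib

section
/- For any permutation σ in the symmetric group S_p and the full cycle γ = (1 2 ... p), the number of cycles satisfies |σ| + |σγ⁻¹| ≤ p + 1. -/
/-!
Multiplying a permutation by a transposition changes its number of cycles by at most one, and
multiplying `σ` by the transposition `(x σx)` with `σ x ≠ x` splits `x` off as a new fixed point.
Peeling such transpositions off `σ`, induction on `n - |σ|` gives `|σ| + |τ| ≤ n + |σ⁻¹τ|` for
permutations of an `n`-element set (the triangle inequality for the Cayley distance `n - |·|`).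
For `τ = σγ⁻¹` this reads `|σ| + |σγ⁻¹| ≤ p + |γ⁻¹|`, and `|γ⁻¹| ≤ 1` since `γ` is a full cycle.
-/

/-- The number of cycles of a permutation (fixed points counted as cycles),
i.e. the number of orbits. -/
noncomputable def cycleCount {p : ℕ} (σ : Equiv.Perm (Fin p)) : ℕ :=
  Nat.card (Quotient (Equiv.Perm.SameCycle.setoid σ))

open Function

namespace Equiv.Perm

variable {α β : Type*}

noncomputable def numCycles (σ : Perm α) : ℕ :=
  Nat.card (Quotient (SameCycle.setoid σ))

theorem quotient_mk_apply (σ : Perm α) (a : α) :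
    (⟦σ a⟧ : Quotient (SameCycle.setoid σ)) = ⟦a⟧ :=
  Quotient.sound (sameCycle_apply_left.2 (SameCycle.refl σ a))

theorem SameCycle.apply_eq_of_comp_eq {σ : Perm α} {f : α → β} (hf : f ∘ σ = f) {x y : α}
    (h : σ.SameCycle x y) : f x = f y := by
  have hinv : f ∘ ⇑σ⁻¹ = f := by
    nth_rw 1 [← hf]
    ext; simp
  suffices ∀ k : ℤ, f ∘ ⇑(σ ^ k) = f by
    obtain ⟨k, rfl⟩ := h
    exact (congrFun (this k) x).symm
  intro k
  induction k using Int.induction_on with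
  | zero => rfl
  | succ k ih => rw [zpow_add_one, coe_mul, ← comp_assoc, ih, hf]
  | pred k ih => rw [zpow_sub_one, coe_mul, ← comp_assoc, ih, hinv]

theorem numCycles_finRotate_inv_le_one (p : ℕ) : numCycles (finRotate p)⁻¹ ≤ 1 := by
  refine Finite.card_le_one_iff_subsingleton.2
    ⟨Quotient.ind₂ fun i j => Quotient.sound (sameCycle_inv.2 ?_)⟩
  rcases lt_or_ge p 2 with hp | hp
  · have : Subsingleton (Fin p) := Fin.subsingleton_iff_le_one.2 (by omega)
    rw [Subsingleton.elim i j]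
  · have hsupp := support_finRotate_of_le hp
    exact (isCycle_finRotate_of_le hp).sameCycle (mem_support.1 (hsupp ▸ Finset.mem_univ i))
      (mem_support.1 (hsupp ▸ Finset.mem_univ j))

section Finite

variable [Finite α] (σ : Perm α)

theorem numCycles_le_card : numCycles σ ≤ Nat.card α :=
  Nat.card_le_card_of_surjective _ Quotient.mk_surjective

theorem card_range_le_numCycles {f : α → β} (hf : f ∘ σ = f) :
    Nat.card (Set.range f) ≤ numCycles σ := by
  rw [← Set.range_quotient_lift (s := SameCycle.setoid σ) fun _ _ h => h.apply_eq_of_comp_eq hf]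
  exact Finite.card_range_le _

variable [DecidableEq α]

theorem numCycles_lt_numCycles_swap_mul {x : α} (hx : σ x ≠ x) :
    numCycles σ < numCycles (swap x (σ x) * σ) := by
  set τ := swap x (σ x) * σ
  have hτx : τ x = x := by simp [τ]
  have hτ : ∀ z, σ.SameCycle (τ z) z := by
    intro z
    simp only [τ, mul_apply]
    rcases eq_or_ne (σ z) x with hz | hz
    · rw [hz, swap_apply_left, ← hz, sameCycle_apply_left, sameCycle_apply_left]
    rcases eq_or_ne z x with rfl | hzx
    · rw [swap_apply_right]
    · rw [swap_apply_of_ne_of_ne hz (σ.injective.ne hzx), sameCycle_apply_left]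
  -- the cycles of `σ`, together with the new fixed point `x` of `τ`
  let f : α → Option (Quotient (SameCycle.setoid σ)) := fun z => if z = x then none else some ⟦z⟧
  have hf : f ∘ τ = f := by
    ext1 z
    by_cases hz : z = x
    · simp [f, hz, hτx]
    · have : τ z ≠ x := fun h => hz (τ.injective (h.trans hτx.symm))
      simpa [f, hz, this] using Quotient.sound (hτ z)
  have hsurj : Surjective f := by
    rintro (_ | q)
    · exact ⟨x, by simp [f]⟩
    · obtain ⟨z, rfl⟩ := Quotient.mk_surjective q
      by_cases hz : z = x
      · exact ⟨σ x, by simp [f, hx, hz, quotient_mk_apply]⟩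
      · exact ⟨z, by simp [f, hz]⟩
  have := card_range_le_numCycles τ hf
  rwa [hsurj.range_eq, Nat.card_univ, Finite.card_option, Nat.add_one_le_iff] at this

theorem numCycles_swap_mul_le (x y : α) : numCycles (swap x y * σ) ≤ numCycles σ + 1 := by
  classical
  set ρ := swap x y * σ
  -- merge the cycle of `y` into that of `x`: this is invariant under `σ = swap x y * ρ`
  let f : α → Quotient (SameCycle.setoid ρ) := fun a =>
    if (⟦a⟧ : Quotient (SameCycle.setoid ρ)) = ⟦y⟧ then ⟦x⟧ else ⟦a⟧
  have hfρ : f ∘ ρ = f := by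
    ext1 a
    simp [f, quotient_mk_apply]
  have hfswap : f ∘ swap x y = f := by
    ext1 a
    rcases eq_or_ne a x with rfl | hax
    · simp [f]
    rcases eq_or_ne a y with rfl | hay
    · simp [f]
    · simp [swap_apply_of_ne_of_ne hax hay]
  have hf : f ∘ σ = f := by
    rw [← swap_mul_self_mul x y σ, coe_mul, ← comp_assoc, hfswap, hfρ]
  have hcover : ∀ q, q ∈ insert ⟦y⟧ (Set.range f) := by
    intro q
    obtain ⟨a, rfl⟩ := Quotient.mk_surjective q
    by_cases ha : (⟦a⟧ : Quotient (SameCycle.setoid ρ)) = ⟦y⟧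
    · exact Or.inl ha
    · exact Or.inr ⟨a, if_neg ha⟩
  have := card_range_le_numCycles σ hf
  rw [Nat.card_coe_set_eq] at this
  calc numCycles ρ = (insert ⟦y⟧ (Set.range f)).ncard := by
        rw [Set.eq_univ_of_forall hcover, Set.ncard_univ]; rfl
    _ ≤ (Set.range f).ncard + 1 := Set.ncard_insert_le _ _
    _ ≤ numCycles σ + 1 := by omega

theorem numCycles_add_numCycles_le (τ : Perm α) :
    numCycles σ + numCycles τ ≤ Nat.card α + numCycles (σ⁻¹ * τ) := by
  induction hn : Nat.card α - numCycles σ using Nat.strong_induction_on generalizing σ τ with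
  | _ n ih =>
  by_cases hσ : σ = 1
  · subst hσ
    have := numCycles_le_card (1 : Perm α)
    simp only [inv_one, one_mul]
    omega
  obtain ⟨x, hx⟩ : ∃ x, σ x ≠ x := not_forall.1 fun h => hσ (ext h)
  set t := swap x (σ x)
  have hsplit : numCycles σ < numCycles (t * σ) := numCycles_lt_numCycles_swap_mul σ hx
  have hmerge : numCycles τ ≤ numCycles (t * τ) + 1 := by
    simpa only [t, swap_mul_self_mul] using numCycles_swap_mul_le (t * τ) x (σ x)
  have hlt : Nat.card α - numCycles (t * σ) < n := by
    have := numCycles_le_card (t * σ)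
    omega
  have := ih _ hlt (t * σ) (t * τ) rfl
  rw [mul_inv_rev, swap_inv, mul_assoc, swap_mul_self_mul] at this
  omega

end Finite

end Equiv.Perm

/-- Biane's inequality: `|σ| + |σγ⁻¹| ≤ p + 1` for the full cycle `γ`. -/
theorem cycleCount_add_cycleCount_mul_inv_fullCycle_le (p : ℕ) (σ : Equiv.Perm (Fin p)) :
    cycleCount σ + cycleCount (σ * (finRotate p)⁻¹) ≤ p + 1 := by
  have h := σ.numCycles_add_numCycles_le (σ * (finRotate p)⁻¹)
  rw [inv_mul_cancel_left, Nat.card_fin] at h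
  have := Equiv.Perm.numCycles_finRotate_inv_le_one p
  change σ.numCycles + (σ * (finRotate p)⁻¹).numCycles ≤ p + 1
  omega
end

section
/- For any noncrossing partition σ ∈ NC_p, viewed as a permutation by cycling inside each block, one has |σγ⁻¹| = p + 1 - |σ|, where γ is the full cycle; i.e., equality in Biane's inequality |σ|+|σγ⁻¹| ≤ p+1 holds for noncrossing permutations. -/
/-- A permutation of `{0,...,p-1}` arises from a noncrossing partition by cycling
inside each block (sending each element of a block to the next larger one, and the
largest back to the smallest), with the blocks (= cycles) forming a noncrossing
partition. -/
def IsNoncrossingPerm {p : ℕ} (σ : Equiv.Perm (Fin p)) : Prop :=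
  (∀ x y : Fin p, σ.SameCycle x y →
      (x < σ x → ¬(x < y ∧ y < σ x)) ∧ (σ x ≤ x → σ x ≤ y ∧ y ≤ x)) ∧
  (∀ a b c d : Fin p, a < b → b < c → c < d →
      σ.SameCycle a c → σ.SameCycle b d → σ.SameCycle a b)

open Equiv Equiv.Perm Finset

namespace Equiv.Perm

variable {α : Type*} [LinearOrder α] [Finite α]

theorem exists_sameCycle_apply_le (σ : Perm α) (z : α) :
    ∃ x, σ.SameCycle z x ∧ σ x ≤ x := by
  have := Fintype.ofFinite α
  classical
  obtain ⟨x, hx, hmax⟩ :=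
    (univ.filter (σ.SameCycle z)).exists_max_image id ⟨z, by simp [SameCycle.refl]⟩
  simp only [mem_filter, mem_univ, true_and, id] at hx hmax
  exact ⟨x, hx, hmax _ hx.apply_right⟩

theorem exists_sameCycle_le_apply (σ : Perm α) (z : α) :
    ∃ x, σ.SameCycle z x ∧ x ≤ σ x := by
  obtain ⟨y, hy, hle⟩ := exists_sameCycle_apply_le σ⁻¹ z
  exact ⟨σ⁻¹ y, sameCycle_symm_apply_right.2 (sameCycle_inv.1 hy), by simpa using hle⟩

end Equiv.Perm

theorem cycleCount_eq_card_filter {p : ℕ} (σ : Perm (Fin p)) (P : Fin p → Prop)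
    [DecidablePred P] (hex : ∀ z, ∃ x, σ.SameCycle z x ∧ P x)
    (huniq : ∀ x y, σ.SameCycle x y → P x → P y → x = y) :
    cycleCount σ = #(univ.filter P) := by
  let e : {x // P x} ≃ Quotient (SameCycle.setoid σ) :=
    Equiv.ofBijective (fun x => Quotient.mk _ x.1)
      ⟨fun a b h => Subtype.ext (huniq _ _ (Quotient.exact h) a.2 b.2),
        Quotient.ind fun z => (hex z).elim fun x hx => ⟨⟨x, hx.2⟩, Quotient.sound hx.1.symm⟩⟩
  rw [cycleCount, ← Nat.card_congr e, Nat.card_eq_fintype_card, Fintype.card_subtype]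

namespace IsNoncrossingPerm

variable {p : ℕ} {σ : Perm (Fin p)}

theorem eq_of_sameCycle_of_apply_le (hσ : IsNoncrossingPerm σ) {x y : Fin p}
    (h : σ.SameCycle x y) (hx : σ x ≤ x) (hy : σ y ≤ y) : x = y :=
  le_antisymm ((hσ.1 y x h.symm).2 hy).2 ((hσ.1 x y h).2 hx).2

theorem mapsTo_Ico_Ioc (hσ : IsNoncrossingPerm σ) {v : Fin p} (hv : v < σ v) :
    Set.MapsTo σ (Set.Ico v (σ v)) (Set.Ioc v (σ v)) := by
  rintro w ⟨hvw, hwσv⟩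
  rcases hvw.eq_or_lt with rfl | hvw
  · exact ⟨hv, le_rfl⟩
  have hvw_cycle : ¬σ.SameCycle v w := fun h => (hσ.1 v w h).1 hv ⟨hvw, hwσv⟩
  have hv_σv : σ.SameCycle v (σ v) := SameCycle.refl σ v |>.apply_right
  have hw_σw : σ.SameCycle w (σ w) := SameCycle.refl σ w |>.apply_right
  refine ⟨lt_of_not_ge fun hσwv => ?_, le_of_not_gt fun hσvσw => ?_⟩
  · rcases hσwv.eq_or_lt with hσwv | hσwv
    · exact hvw_cycle (hσwv ▸ hw_σw).symm
    · exact hvw_cycle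
        ((hσ.2 _ _ _ _ hσwv hvw hwσv hw_σw.symm hv_σv).symm.trans hw_σw.symm)
  · exact hvw_cycle (hσ.2 _ _ _ _ hvw hwσv hσvσw hv_σv hw_σw)

end IsNoncrossingPerm

theorem Fin.add_one_le_iff_eq_last_or_lt {n : ℕ} {s t : Fin (n + 1)} :
    s + 1 ≤ t ↔ s = Fin.last n ∨ s < t := by
  rcases eq_or_ne s (Fin.last n) with rfl | hs
  · simp
  · rw [Fin.le_def, Fin.lt_def, Fin.val_add_one_of_lt (Fin.lt_last_iff_ne_last.2 hs)]
    simp only [hs, false_or]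
    omega

section FullCycle

variable {n : ℕ}

theorem finRotate_inv_mapsTo_Ioc_Ico (a b : Fin (n + 1)) :
    Set.MapsTo ⇑(finRotate (n + 1))⁻¹ (Set.Ioc a b) (Set.Ico a b) := by
  rintro z ⟨haz, hzb⟩
  have hz : z ≠ 0 := ((Fin.zero_le a).trans_lt haz).ne'
  rw [Perm.inv_def, finRotate_symm_apply]
  simp only [Set.mem_Ico, Fin.le_def, Fin.lt_def, Fin.val_sub_one_of_ne_zero hz] at *
  omega

theorem mul_finRotate_inv_apply_add_one (σ : Perm (Fin (n + 1))) (s : Fin (n + 1)) :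
    (σ * (finRotate (n + 1))⁻¹) (s + 1) = σ s := by
  rw [Perm.mul_apply, Perm.inv_eq_iff_eq.2 (finRotate_apply s).symm]

namespace IsNoncrossingPerm

variable {σ : Perm (Fin (n + 1))}

theorem mapsTo_mul_finRotate_inv (hσ : IsNoncrossingPerm σ) {v : Fin (n + 1)} (hv : v < σ v) :
    Set.MapsTo ⇑(σ * (finRotate (n + 1))⁻¹) (Set.Ioc v (σ v)) (Set.Ioc v (σ v)) :=
  (hσ.mapsTo_Ico_Ioc hv).comp (finRotate_inv_mapsTo_Ioc_Ico v (σ v))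

theorem eq_of_sameCycle_of_le_apply (hσ : IsNoncrossingPerm σ) {x y : Fin (n + 1)}
    (h : (σ * (finRotate (n + 1))⁻¹).SameCycle x y)
    (hx : x ≤ (σ * (finRotate (n + 1))⁻¹) x) (hy : y ≤ (σ * (finRotate (n + 1))⁻¹) y) :
    x = y := by
  suffices key : ∀ a b, a < b → (σ * (finRotate (n + 1))⁻¹).SameCycle b a →
      b ≤ (σ * (finRotate (n + 1))⁻¹) b → False by
    rcases lt_trichotomy x y with hxy | hxy | hxy
    exacts [(key x y hxy h.symm hy).elim, hxy, (key y x hxy h hx).elim]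
  intro a b hab hba hb
  obtain ⟨hav, hvb⟩ := finRotate_inv_mapsTo_Ioc_Ico a b ⟨hab, le_rfl⟩
  set v := (finRotate (n + 1))⁻¹ b
  have hbσv : b ≤ σ v := hb
  obtain ⟨i, -, rfl⟩ := hba.exists_pow_eq'
  have hva := (hσ.mapsTo_mul_finRotate_inv (hvb.trans_le hbσv)).iterate i ⟨hvb, hbσv⟩
  rw [← Perm.coe_pow] at hva
  exact hva.1.not_ge hav

end IsNoncrossingPerm

end FullCycle

theorem card_filter_le_mul_finRotate_inv_apply {n : ℕ} (σ : Perm (Fin (n + 1))) :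
    #{t | t ≤ (σ * (finRotate (n + 1))⁻¹) t} = #{s | s < σ s} + 1 :=
  calc #{t | t ≤ (σ * (finRotate (n + 1))⁻¹) t}
    _ = #{s | s + 1 ≤ σ s} := by
      refine (card_equiv (Equiv.addRight 1) fun s => ?_).symm
      simp only [mem_filter, mem_univ, true_and, coe_addRight, mul_finRotate_inv_apply_add_one]
    _ = #(insert (Fin.last n) ({s | s < σ s} : Finset _)) := by
      congr 1; ext s; simp [Fin.add_one_le_iff_eq_last_or_lt]
    _ = #{s | s < σ s} + 1 := card_insert_of_notMem (by simp [Fin.le_last])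

/-- Equality in Biane's inequality for noncrossing permutations:
`|σ| + |σγ⁻¹| = p + 1`, i.e. `|σγ⁻¹| = p + 1 - |σ|`. -/
theorem cycleCount_mul_inv_fullCycle_of_noncrossing (p : ℕ) (hp : 0 < p)
    (σ : Equiv.Perm (Fin p)) (hσ : IsNoncrossingPerm σ) :
    cycleCount σ + cycleCount (σ * (finRotate p)⁻¹) = p + 1 := by
  obtain ⟨n, rfl⟩ := Nat.exists_eq_add_one_of_ne_zero hp.ne'
  rw [cycleCount_eq_card_filter σ _ σ.exists_sameCycle_apply_le
      (fun _ _ => hσ.eq_of_sameCycle_of_apply_le),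
    cycleCount_eq_card_filter _ _ (exists_sameCycle_le_apply _)
      (fun _ _ => hσ.eq_of_sameCycle_of_le_apply),
    card_filter_le_mul_finRotate_inv_apply, ← add_assoc]
  simp_rw [← not_le]
  rw [card_filter_add_card_filter_not, card_univ, Fintype.card_fin]
end

section
/- For any noncrossing permutation σ ∈ NC_p and the full cycle γ, the permutations σγ⁻¹ and γ⁻¹σ have the same number of cycles, namely p + 1 - |σ|. -/
/-!
Induct on the size of the support of `σ`. If `σ ≠ 1`, let `m` be its largest non-fixed point and
`a = σ⁻¹ m`. As `m` is the largest element of its block, `σ' = σ (a m)` detaches `m` from that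
block: `σ'` is again noncrossing and has one cycle more than `σ`. On the other side
`σ γ⁻¹ (γa γm) = σ' γ⁻¹`, and noncrossingness makes the interval `(a, m]` invariant under
`σ γ⁻¹`; it contains `γ a` but not `γ m`, so the transposition merges two cycles of `σ γ⁻¹` and
`σ' γ⁻¹` has one cycle fewer. Hence `|σ γ⁻¹| + |σ|` is the same for `σ` and `σ'`, and it is
`1 + p` at `σ = 1`. Finally `γ⁻¹ σ` is conjugate to `σ γ⁻¹`.
-/

open Equiv Equiv.Perm

-- the hypotheses say that `s` is `r` with the classes of `u` and `v` merged
theorem Setoid.card_quotient_eq_add_one {α : Type*} [Finite α] {r s : Setoid α} (hle : r ≤ s)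
    {u v : α} (hr : ¬r u v) (hs : s u v) (hsr : ∀ x y, s x y → ¬r x u → ¬r x v → r x y) :
    Nat.card (Quotient r) = Nat.card (Quotient s) + 1 := by
  classical
  let merge : {c : Quotient r // c ≠ ⟦v⟧} → Quotient s := fun c => Quotient.map' id hle c.1
  have hbij : Function.Bijective merge := by
    constructor
    · rintro ⟨⟨x⟩, hx⟩ ⟨⟨y⟩, hy⟩ hxy
      have hxv : ¬r x v := fun h => hx (Quotient.sound h)
      have hyv : ¬r y v := fun h => hy (Quotient.sound h)
      replace hxy : s x y := Quotient.exact hxy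
      refine Subtype.ext (Quotient.sound ?_)
      by_cases hxu : r x u
      · by_cases hyu : r y u
        · exact r.trans hxu (r.symm hyu)
        · exact r.symm (hsr y x (s.symm hxy) hyu hyv)
      · exact hsr x y hxy hxu hxv
    · rintro ⟨x⟩
      by_cases hxv : r x v
      · exact ⟨⟨⟦u⟧, fun h => hr (Quotient.exact h)⟩,
          Quotient.sound (s.trans hs (hle (r.symm hxv)))⟩
      · exact ⟨⟨⟦x⟧, fun h => hxv (Quotient.exact h)⟩, rfl⟩
  rw [← Nat.card_eq_of_bijective merge hbij, ← Finite.card_option,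
    Nat.card_congr (optionSubtypeNe _)]

namespace Equiv.Perm

variable {α : Type*} {f : Perm α} {x y : α}

theorem mul_swap_apply_of_ne [DecidableEq α] {u v z : α} (hu : z ≠ u) (hv : z ≠ v) :
    (f * swap u v) z = f z := by
  rw [mul_apply, swap_apply_of_ne_of_ne hu hv]

theorem card_support_mul_swap_lt [DecidableEq α] [Fintype α] {σ : Perm α} {a m : α}
    (ha : σ a = m) (ham : a ≠ m) : (σ * swap a m).support.card < σ.support.card := by
  have hm : m ∈ σ.support := mem_support.2 fun h => ham (σ.injective (ha.trans h.symm))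
  refine Finset.card_lt_card ((Finset.ssubset_iff_of_subset fun x hx => ?_).2
    ⟨m, hm, by simp [ha]⟩)
  by_cases hxa : x = a
  · exact hxa ▸ apply_mem_support.1 (ha ▸ hm)
  by_cases hxm : x = m
  · exact hxm ▸ hm
  rwa [mem_support, mul_swap_apply_of_ne hxa hxm, ← mem_support] at hx

theorem exists_apply_eq_lt_of_ne_one [LinearOrder α] [Fintype α] {σ : Perm α} (hσ : σ ≠ 1) :
    ∃ a m, σ a = m ∧ a < m ∧ ∀ y ∈ σ.support, y ≤ m := by
  have hne : σ.support.Nonempty := Finset.nonempty_iff_ne_empty.2 (support_eq_empty_iff.not.2 hσ)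
  set m := σ.support.max' hne
  have hm : m ∈ σ.support := σ.support.max'_mem hne
  have ha : σ (σ.symm m) = m := σ.apply_symm_apply m
  refine ⟨σ.symm m, m, ha, lt_of_le_of_ne ?_ ?_, fun y hy => σ.support.le_max' y hy⟩
  · exact σ.support.le_max' _ (apply_mem_support.1 (by rwa [ha]))
  · intro h
    exact mem_support.1 hm (by rwa [h] at ha)

variable [Finite α]

theorem SameCycle.mem_of_mapsTo {s : Set α} (hs : Set.MapsTo f s s) (hxy : f.SameCycle x y)
    (hx : x ∈ s) : y ∈ s := by
  obtain ⟨n, rfl⟩ := hxy.exists_nat_pow_eq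
  rw [coe_pow]
  exact hs.iterate n hx

section MulSwap

variable [DecidableEq α] {u v : α}

theorem sameCycle_mul_swap (h : ¬f.SameCycle u v) : (f * swap u v).SameCycle u v := by
  by_contra huv
  -- follow the `f`-orbit of `v` from `f v = (f * swap u v) u` until it comes back to `v`
  have hmaps : Set.MapsTo f {z | (f * swap u v).SameCycle u z ∧ f.SameCycle v z}
      {z | (f * swap u v).SameCycle u z ∧ f.SameCycle v z} := by
    rintro z ⟨hz, hvz⟩
    have hzu : z ≠ u := by rintro rfl; exact h hvz.symm
    have hzv : z ≠ v := by rintro rfl; exact huv hz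
    rw [Set.mem_ofPred_eq, ← mul_swap_apply_of_ne hzu hzv, sameCycle_apply_right,
      mul_swap_apply_of_ne hzu hzv, sameCycle_apply_right]
    exact ⟨hz, hvz⟩
  exact huv (SameCycle.mem_of_mapsTo hmaps (sameCycle_apply_left.2 .rfl)
    ⟨⟨1, by simp⟩, sameCycle_apply_right.2 .rfl⟩).1

theorem SameCycle.mul_swap (h : ¬f.SameCycle u v) (hxy : f.SameCycle x y) :
    (f * swap u v).SameCycle x y := by
  have hstep : ∀ z, (f * swap u v).SameCycle z (f z) := by
    intro z
    by_cases hzu : z = u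
    · subst hzu
      exact (sameCycle_mul_swap h).trans ⟨1, by simp⟩
    by_cases hzv : z = v
    · subst hzv
      exact (sameCycle_mul_swap h).symm.trans ⟨1, by simp⟩
    rw [← mul_swap_apply_of_ne hzu hzv, sameCycle_apply_right]
  exact hxy.mem_of_mapsTo (s := {z | (f * swap u v).SameCycle x z})
    (fun z hz => SameCycle.trans hz (hstep z)) .rfl

theorem SameCycle.of_mul_swap (hxy : (f * swap u v).SameCycle x y) (hxu : ¬f.SameCycle x u)
    (hxv : ¬f.SameCycle x v) : f.SameCycle x y := by
  refine hxy.mem_of_mapsTo (s := {z | f.SameCycle x z}) (fun z hz => ?_) .rfl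
  have hzu : z ≠ u := by rintro rfl; exact hxu hz
  have hzv : z ≠ v := by rintro rfl; exact hxv hz
  rw [Set.mem_ofPred_eq, mul_swap_apply_of_ne hzu hzv, sameCycle_apply_right]
  exact hz

theorem card_quotient_sameCycle_eq_mul_swap_add_one (h : ¬f.SameCycle u v) :
    Nat.card (Quotient (SameCycle.setoid f)) =
      Nat.card (Quotient (SameCycle.setoid (f * swap u v))) + 1 :=
  Setoid.card_quotient_eq_add_one (fun _ _ => SameCycle.mul_swap h) h (sameCycle_mul_swap h)
    fun _ _ => SameCycle.of_mul_swap

end MulSwap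

end Equiv.Perm

section CycleCount

variable {n : ℕ}

theorem cycleCount_one : cycleCount (1 : Perm (Fin n)) = n := by
  rw [cycleCount, ← Nat.card_eq_of_bijective (Quotient.mk _)
    ⟨fun x y h => sameCycle_one.1 (Quotient.exact h), Quotient.mk_surjective⟩, Nat.card_fin]

theorem cycleCount_eq_one_of_forall_sameCycle [NeZero n] {f : Perm (Fin n)}
    (h : ∀ x y, f.SameCycle x y) : cycleCount f = 1 :=
  Nat.card_eq_one_iff_unique.2
    ⟨⟨Quotient.ind₂ fun x y => Quotient.sound (h x y)⟩, ⟨⟦0⟧⟩⟩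

theorem cycleCount_conj (f g : Perm (Fin n)) : cycleCount (g * f * g⁻¹) = cycleCount f :=
  (Nat.card_congr (Quotient.congr g fun x y => by
    change f.SameCycle x y ↔ (g * f * g⁻¹).SameCycle (g x) (g y)
    simp [sameCycle_conj])).symm

theorem cycleCount_eq_mul_swap_add_one {f : Perm (Fin n)} {u v : Fin n}
    (h : ¬f.SameCycle u v) : cycleCount f = cycleCount (f * swap u v) + 1 :=
  card_quotient_sameCycle_eq_mul_swap_add_one h

theorem cycleCount_mul_swap_of_apply_eq {σ : Perm (Fin n)} {a m : Fin n} (ha : σ a = m)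
    (ham : a ≠ m) : cycleCount (σ * swap a m) = cycleCount σ + 1 := by
  have hfix : (σ * swap a m) m = m := by simp [ha]
  rw [cycleCount_eq_mul_swap_add_one (u := a) (v := m) fun h => ham (h.eq_of_right hfix),
    mul_swap_mul_self]

theorem sameCycle_finRotate [NeZero n] (x y : Fin n) : (finRotate n).SameCycle x y :=
  ⟨(y - x).val, by
    rw [zpow_natCast, coe_pow, ← finCycle_eq_finRotate_iterate, finCycle_apply, add_sub_cancel]⟩

end CycleCount

section FinRotate

variable {n : ℕ} {a b : Fin (n + 1)}

theorem mapsTo_finRotate_inv_Ioc_Ico :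
    Set.MapsTo ((finRotate (n + 1))⁻¹ : Perm _) (Set.Ioc a b) (Set.Ico a b) := by
  rintro x ⟨hax, hxb⟩
  have hval := coe_finRotate_symm_of_ne_zero ((Fin.zero_le a).trans_lt hax).ne'
  change a ≤ (finRotate (n + 1)).symm x ∧ (finRotate (n + 1)).symm x < b
  simp only [Fin.le_def, Fin.lt_def] at hax hxb ⊢
  omega

theorem finRotate_mem_Ioc (hab : a < b) : finRotate (n + 1) a ∈ Set.Ioc a b := by
  have hval := coe_finRotate_of_ne_last (Fin.ne_last_of_lt hab)
  simp only [Set.mem_Ioc, Fin.le_def, Fin.lt_def] at hab ⊢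
  omega

theorem finRotate_notMem_Ioc : finRotate (n + 1) b ∉ Set.Ioc a b := by
  rcases eq_or_ne b (Fin.last n) with rfl | hb
  · simp
  · have hval := coe_finRotate_of_ne_last hb
    simp only [Set.mem_Ioc, Fin.le_def, Fin.lt_def]
    omega

end FinRotate

namespace IsNoncrossingPerm

section

variable {n : ℕ} {σ : Perm (Fin n)} {a m : Fin n}

theorem not_sameCycle_of_mem_Ioo (hσ : IsNoncrossingPerm σ) (ha : σ a = m) (ham : a < m)
    {y : Fin n} (hy : y ∈ Set.Ioo a m) : ¬σ.SameCycle a y := fun h =>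
  (hσ.1 a y h).1 (ha ▸ ham) (ha ▸ hy)

theorem mapsTo_Ico_Ioc_s5 (hσ : IsNoncrossingPerm σ) (ha : σ a = m) (ham : a < m)
    (hmax : ∀ y ∈ σ.support, y ≤ m) : Set.MapsTo σ (Set.Ico a m) (Set.Ioc a m) := by
  rintro y ⟨hay, hym⟩
  rcases hay.eq_or_lt with rfl | hay
  · rw [ha]; exact ⟨ham, le_rfl⟩
  by_cases hfix : σ y = y
  · rw [hfix]; exact ⟨hay, hym.le⟩
  have hσym : σ y < m := (hmax _ (apply_mem_support.2 (mem_support.2 hfix))).lt_of_ne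
    fun h => hay.ne (σ.injective (ha.trans h.symm))
  refine ⟨lt_of_not_ge fun hle => hσ.not_sameCycle_of_mem_Ioo ha ham ⟨hay, hym⟩ ?_, hσym.le⟩
  have hy : σ.SameCycle (σ y) y := sameCycle_apply_left.2 .rfl
  rcases hle.lt_or_eq with hlt | heq
  · -- `σ y < a < y < m` with `σ y ~ y` and `a ~ m`: the blocks would cross
    exact (hσ.2 _ _ _ _ hlt hay hym hy (ha ▸ sameCycle_apply_right.2 .rfl)).symm.trans hy
  · exact heq ▸ hy

theorem mul_swap (hσ : IsNoncrossingPerm σ) (ha : σ a = m) (ham : a < m)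
    (hmax : ∀ y ∈ σ.support, y ≤ m) : IsNoncrossingPerm (σ * swap a m) := by
  set τ := σ * swap a m
  have hτm : τ m = m := by simp [τ, ha]
  have hsep : ¬τ.SameCycle a m := fun h => ham.ne (h.eq_of_right hτm)
  have hτσ : τ * swap a m = σ := mul_swap_mul_self a m σ
  have forward {x y : Fin n} (h : τ.SameCycle x y) : σ.SameCycle x y := hτσ ▸ h.mul_swap hsep
  have hfixed {x : Fin n} (h : τ.SameCycle x m) : x = m := h.eq_of_right hτm
  have backward {x y : Fin n} (hx : x ≠ m) (hy : y ≠ m) (hxy : σ.SameCycle x y) :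
      τ.SameCycle x y := by
    rw [← hτσ] at hxy
    by_cases hxa : τ.SameCycle x a
    · by_cases hya : τ.SameCycle y a
      · exact hxa.trans hya.symm
      · exact (hxy.symm.of_mul_swap hya fun h => hy (hfixed h)).symm
    · exact hxy.of_mul_swap hxa fun h => hx (hfixed h)
  have ham_cycle : σ.SameCycle a m := ha ▸ sameCycle_apply_right.2 .rfl
  -- `m` is the maximum of its block, so `σ m` is the minimum
  have hblock {y : Fin n} (hy : σ.SameCycle m y) : σ m ≤ y ∧ y ≤ m :=
    (hσ.1 m y hy).2 (hmax _ (apply_mem_support.2 (ha ▸ apply_mem_support.2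
      (mem_support.2 (ha ▸ ham.ne')))))
  refine ⟨fun x y hxy => ?_, fun b c d e hbc hcd hde hbd hce => ?_⟩
  · by_cases hxm : x = m
    · subst hxm
      obtain rfl := hfixed hxy.symm
      simp
    by_cases hxa : x = a
    · subst hxa
      have hy : σ.SameCycle m y := ham_cycle.symm.trans (forward hxy)
      have hym : y < m := (hblock hy).2.lt_of_ne fun h => hsep (h ▸ hxy)
      have hya : y ≤ x := le_of_not_gt fun hxy' =>
        hσ.not_sameCycle_of_mem_Ioo ha ham ⟨hxy', hym⟩ (ham_cycle.trans hy)
      rw [show τ x = σ m by simp [τ]]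
      exact ⟨fun hlt => absurd (hblock ham_cycle.symm).1 hlt.not_ge, fun _ => ⟨(hblock hy).1, hya⟩⟩
    · rw [mul_swap_apply_of_ne hxa hxm]
      exact hσ.1 x y (forward hxy)
  · have hbm : b ≠ m := fun h => (hbc.trans hcd).ne (hbd.eq_of_left (h ▸ hτm))
    have hcm : c ≠ m := fun h => (hcd.trans hde).ne (hce.eq_of_left (h ▸ hτm))
    exact backward hbm hcm (hσ.2 b c d e hbc hcd hde (forward hbd) (forward hce))

end

variable {n : ℕ} {σ : Perm (Fin (n + 1))}

theorem cycleCount_mul_finRotate_inv {a m : Fin (n + 1)} (hσ : IsNoncrossingPerm σ)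
    (ha : σ a = m) (ham : a < m) (hmax : ∀ y ∈ σ.support, y ≤ m) :
    cycleCount (σ * (finRotate (n + 1))⁻¹) =
      cycleCount (σ * swap a m * (finRotate (n + 1))⁻¹) + 1 := by
  set γ := finRotate (n + 1)
  have hinv : Set.MapsTo (σ * γ⁻¹) (Set.Ioc a m) (Set.Ioc a m) :=
    (hσ.mapsTo_Ico_Ioc_s5 ha ham hmax).comp mapsTo_finRotate_inv_Ioc_Ico
  have hsep : ¬(σ * γ⁻¹).SameCycle (γ a) (γ m) := fun h =>
    finRotate_notMem_Ioc (h.mem_of_mapsTo hinv (finRotate_mem_Ioc ham))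
  rw [cycleCount_eq_mul_swap_add_one hsep, swap_apply_apply]
  simp only [mul_assoc, inv_mul_cancel_left]

theorem cycleCount_mul_finRotate_inv_add_cycleCount (hσ : IsNoncrossingPerm σ) :
    cycleCount (σ * (finRotate (n + 1))⁻¹) + cycleCount σ = n + 2 := by
  induction hk : σ.support.card using Nat.strong_induction_on generalizing σ with
  | _ k ih =>
  rcases eq_or_ne σ 1 with rfl | hne
  · rw [one_mul, cycleCount_one,
      cycleCount_eq_one_of_forall_sameCycle fun x y => sameCycle_inv.2 (sameCycle_finRotate x y)]
    ring
  obtain ⟨a, m, ha, ham, hmax⟩ := exists_apply_eq_lt_of_ne_one hne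
  have hsplit := ih _ (hk ▸ card_support_mul_swap_lt ha ham.ne) (hσ.mul_swap ha ham hmax) rfl
  rw [cycleCount_mul_finRotate_inv hσ ha ham hmax, ← hsplit,
    cycleCount_mul_swap_of_apply_eq ha ham.ne]
  ring

end IsNoncrossingPerm

/-- For a noncrossing permutation `σ` and the full cycle `γ`, the permutations
`σγ⁻¹` and `γ⁻¹σ` have the same number of cycles, namely `p + 1 - |σ|`. -/
theorem cycleCount_kreweras (p : ℕ) (hp : 0 < p)
    (σ : Equiv.Perm (Fin p)) (hσ : IsNoncrossingPerm σ) :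
    cycleCount (σ * (finRotate p)⁻¹) = cycleCount ((finRotate p)⁻¹ * σ) ∧
    cycleCount (σ * (finRotate p)⁻¹) = p + 1 - cycleCount σ := by
  obtain ⟨n, rfl⟩ := Nat.exists_eq_add_one_of_ne_zero hp.ne'
  refine ⟨?_, ?_⟩
  · rw [← cycleCount_conj (σ * _) (finRotate (n + 1))⁻¹, inv_inv, mul_assoc, inv_mul_cancel_right]
  · have := hσ.cycleCount_mul_finRotate_inv_add_cycleCount
    omega
end

section
/- Let E = diag(1, w, ..., w^{n-1}) ∈ M_n(ℂ) with w = e^{2πi/n}, and let Λ ∈ M_n(ℂ)⊗M_n(ℂ) have entries Λ_{ab,cd} = δ_{ab}δ_{cd}w^a (the Choi matrix of φ(A)=EA). Then for any σ, τ ∈ S_p and signs e_1,...,e_p ∈ {+1,-1}: n^{-|σ|-|τ|} Σ_{i_1,...,i_p} Π_s δ_{i_{σ(s)} i_{τ(s)}} w^{e_s i_s} = n^{|στ⁻¹|-|σ|-|τ|} · Π_{β block of the orbit partition of στ⁻¹} [n divides Σ_{b∈β} e_b]. -/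
/-! The constraints `i (σ s) = i (τ s)` say exactly that `i` is constant on the cycles of
`c = στ⁻¹`, so the sum runs over maps `j` from the cycles of `c` to `Fin n`. The summand for `j`
is `∏_β w ^ (E_β * j β)`, where `E_β` is the sum of the weights `e` over the block `β`, so the
sum factors into the geometric sums `∑_k w ^ (E_β * k)`, each equal to `n` or `0` according as
`n ∣ E_β` or not. -/

open Finset Equiv

theorem Finset.prod_zpow_eq_zpow_sum₀ {ι G : Type*} [CommGroupWithZero G] (s : Finset ι)
    {a : G} (ha : a ≠ 0) (f : ι → ℤ) : ∏ i ∈ s, a ^ f i = a ^ ∑ i ∈ s, f i := by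
  induction s using Finset.cons_induction with
  | empty => simp
  | cons b s hb ih => rw [prod_cons, sum_cons, ih, zpow_add₀ ha]

theorem Finset.prod_zpow_mul_eq_prod_fiberwise {α ι G : Type*} [Fintype α] [Fintype ι]
    [DecidableEq ι] [CommGroupWithZero G] {a : G} (ha : a ≠ 0) (π : α → ι) (e : α → ℤ)
    (j : ι → ℤ) : ∏ s, a ^ (e s * j (π s)) = ∏ q, a ^ ((∑ s with π s = q, e s) * j q) := by
  rw [← prod_fiberwise univ π]
  refine prod_congr rfl fun q _ => ?_
  rw [sum_mul, ← prod_zpow_eq_zpow_sum₀ _ ha]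
  refine prod_congr rfl fun s hs => ?_
  rw [(mem_filter.1 hs).2]

namespace IsPrimitiveRoot

variable {K : Type*} [Field K] {ζ : K} {n : ℕ}

theorem sum_zpow_mul (hζ : IsPrimitiveRoot ζ n) (m : ℤ) :
    ∑ k : Fin n, ζ ^ (m * k) = if (n : ℤ) ∣ m then (n : K) else 0 := by
  simp_rw [zpow_mul, zpow_natCast]
  rw [Fin.sum_univ_eq_sum_range (fun k => (ζ ^ m) ^ k) n]
  split_ifs with h
  · simp [(hζ.zpow_eq_one_iff_dvd m).2 h]
  · have hpow : (ζ ^ m) ^ n = 1 := by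
      rw [← zpow_natCast, ← zpow_mul, mul_comm, zpow_mul, zpow_natCast, hζ.pow_eq_one, one_zpow]
    rw [geom_sum_eq (mt (hζ.zpow_eq_one_iff_dvd m).1 h), hpow, sub_self, zero_div]

theorem sum_pi_prod_zpow_mul (hζ : IsPrimitiveRoot ζ n) {ι : Type*} [Fintype ι]
    [DecidableEq ι] (E : ι → ℤ) :
    ∑ j : ι → Fin n, ∏ q, ζ ^ (E q * j q) =
      if ∀ q, (n : ℤ) ∣ E q then (n : K) ^ Fintype.card ι else 0 := by
  rw [← Fintype.prod_sum (fun q (k : Fin n) => ζ ^ (E q * (k : ℕ)))]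
  simp_rw [hζ.sum_zpow_mul, Fintype.prod_ite_zero, prod_const, card_univ]

end IsPrimitiveRoot

theorem Setoid.sum_filter_le_ker {α β M : Type*} [Fintype α] [DecidableEq α] [Fintype β]
    [AddCommMonoid M] (r : Setoid α) [Fintype (Quotient r)] [DecidableEq (Quotient r)]
    [DecidablePred fun f : α → β => r ≤ Setoid.ker f] (F : (α → β) → M) :
    ∑ f with r ≤ Setoid.ker f, F f = ∑ g : Quotient r → β, F (g ∘ Quotient.mk r) := by
  rw [sum_subtype (p := fun f : α → β => r ≤ Setoid.ker f) _ (fun f => by simp) F]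
  exact Fintype.sum_equiv (Setoid.liftEquiv r) _ _ fun f => rfl

namespace Equiv.Perm

variable {α β : Type*}

theorem SameCycle.apply_eq_apply_of_comp_eq [Finite α] {c : Perm α} {f : α → β}
    (hf : f ∘ c = f) {x y : α} (h : c.SameCycle x y) : f x = f y := by
  obtain ⟨k, -, rfl⟩ := h.exists_pow_eq'
  have hc : Function.Semiconj f c id := congrFun hf
  simpa [coe_pow] using (hc.iterate_right k x).symm

theorem forall_apply_eq_apply_iff_le_ker [Finite α] (σ τ : Perm α) (f : α → β) :
    (∀ s, f (σ s) = f (τ s)) ↔ SameCycle.setoid (σ * τ⁻¹) ≤ Setoid.ker f := by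
  constructor
  · intro h x y hxy
    refine hxy.apply_eq_apply_of_comp_eq (funext fun t => ?_)
    simpa using h (τ⁻¹ t)
  · intro h s
    exact h (SameCycle.symm ⟨1, by simp⟩)

theorem sum_prod_ite_apply_eq_apply [Fintype α] [DecidableEq α] [Fintype β] [DecidableEq β]
    {R : Type*} [CommSemiring R] (σ τ : Perm α)
    [Fintype (Quotient (SameCycle.setoid (σ * τ⁻¹)))]
    [DecidableEq (Quotient (SameCycle.setoid (σ * τ⁻¹)))] (g : α → β → R) :
    ∑ i : α → β, ∏ s, (if i (σ s) = i (τ s) then g s (i s) else 0) =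
      ∑ j : Quotient (SameCycle.setoid (σ * τ⁻¹)) → β,
        ∏ s, g s (j (Quotient.mk _ s)) := by
  classical
  calc _ = ∑ i with SameCycle.setoid (σ * τ⁻¹) ≤ Setoid.ker i, ∏ s, g s (i s) := by
        rw [sum_filter]
        refine sum_congr rfl fun i _ => ?_
        rw [Fintype.prod_ite_zero]
        exact if_congr (forall_apply_eq_apply_iff_le_ker σ τ i) rfl rfl
    _ = _ := Setoid.sum_filter_le_ker _ _

end Equiv.Perm

open Complex in
theorem generalized_star_moment_bessel_general (n p : ℕ) (hn : 0 < n)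
    (σ τ : Equiv.Perm (Fin p)) (e : Fin p → ℤ) :
    (n : ℂ) ^ (-(cycleCount σ : ℤ) - (cycleCount τ : ℤ)) *
      ∑ i : Fin p → Fin n, ∏ s : Fin p,
        (if i (σ s) = i (τ s)
          then Complex.exp (2 * Real.pi * I / n) ^ (e s * (i s : ℤ)) else 0)
    = (n : ℂ) ^ ((cycleCount (σ * τ⁻¹) : ℤ) - cycleCount σ - cycleCount τ) *
      (if ∀ x : Fin p,
          (n : ℤ) ∣ ∑ y ∈ Finset.univ.filter (fun y => (σ * τ⁻¹).SameCycle x y), e y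
        then 1 else 0) := by
  classical
  set w := Complex.exp (2 * Real.pi * I / n)
  have hw : IsPrimitiveRoot w n := Complex.isPrimitiveRoot_exp n hn.ne'
  set c := σ * τ⁻¹
  let mk := Quotient.mk (Perm.SameCycle.setoid c)
  let E := fun q => ∑ s with mk s = q, e s
  have hsum :
      ∑ i : Fin p → Fin n, ∏ s, (if i (σ s) = i (τ s) then w ^ (e s * (i s : ℤ)) else 0) =
        if ∀ q, (n : ℤ) ∣ E q then (n : ℂ) ^ cycleCount c else 0 := by
    rw [Perm.sum_prod_ite_apply_eq_apply σ τ fun s (k : Fin n) => w ^ (e s * (k : ℤ)),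
      cycleCount, Nat.card_eq_fintype_card, ← hw.sum_pi_prod_zpow_mul E]
    exact sum_congr rfl fun j _ =>
      prod_zpow_mul_eq_prod_fiberwise (hw.ne_zero hn.ne') mk e fun q => (j q : ℤ)
  have hblock : (∀ q, (n : ℤ) ∣ E q) ↔ ∀ x, (n : ℤ) ∣ ∑ y with c.SameCycle x y, e y := by
    refine Quotient.forall.trans (forall_congr' fun x => ?_)
    have hfiber : ∀ y, mk y = mk x ↔ c.SameCycle x y := fun _ =>
      Quotient.eq.trans Perm.sameCycle_comm
    change (n : ℤ) ∣ ∑ y with mk y = mk x, e y ↔ _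
    rw [filter_congr fun y _ => hfiber y]
  have hn' : (n : ℂ) ≠ 0 := Nat.cast_ne_zero.2 hn.ne'
  rw [hsum]
  simp only [hblock]
  split_ifs
  · simp only [sub_eq_add_neg, zpow_add₀ hn', zpow_natCast, mul_one]
    ring
  · simp

open Complex in
/-- Generalized `*`-moments for the Choi matrix of `φ(A) = EA`,
`E = diag(1, w, ..., w^{n-1})`, `w = e^{2πi/n}`:
`n^{-|σ|-|τ|} Σ_i Π_s δ_{i_{σ(s)} i_{τ(s)}} w^{e_s i_s}` equals
`n^{|στ⁻¹|-|σ|-|τ|}` times the product over blocks `β` of the orbit partition of `στ⁻¹`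
of the indicator `[n ∣ Σ_{b∈β} e_b]` (equivalently, the indicator that every block sum
of the weights is divisible by `n`). -/
theorem generalized_star_moment_bessel (n p : ℕ) (hn : 0 < n)
    (σ τ : Equiv.Perm (Fin p)) (e : Fin p → ℤ) (he : ∀ s, e s = 1 ∨ e s = -1) :
    (n : ℂ) ^ (-(cycleCount σ : ℤ) - (cycleCount τ : ℤ)) *
      ∑ i : Fin p → Fin n, ∏ s : Fin p,
        (if i (σ s) = i (τ s)
          then Complex.exp (2 * Real.pi * I / n) ^ (e s * (i s : ℤ)) else 0)
    = (n : ℂ) ^ ((cycleCount (σ * τ⁻¹) : ℤ) - cycleCount σ - cycleCount τ) *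
      (if ∀ x : Fin p,
          (n : ℤ) ∣ ∑ y ∈ Finset.univ.filter (fun y => (σ * τ⁻¹).SameCycle x y), e y
        then 1 else 0) :=
  generalized_star_moment_bessel_general n p hn σ τ e
end
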